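/- Consider the set 𝒢 of congestion games with at most n users and resource cost functions in 𝓛 for positive basis functions b_1,…,b_m. Suppose that for each j ∈ {1,…,m} there are F_j : {0,…,n+1} → ℝ with F_j(0) = F_j(n+1) = 0 and ρ_j > 0 satisfying b_j(y)·y − ρ_j·b_j(x)·x + F_j(x)·(x−z) − F_j(x+1)·(y−z) ≥ 0 for all (x,y,z) ∈ I(n), where b_j(0) = 0. Then the linear local incentive mechanism T defined by T(Σ_j α_j b_j) = Σ_j α_j (F_j − b_j) satisfies PoA(T) ≤ max_j 1/ρ_j. -/

import Mathlib

open scoped BigOperators ENNReal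

noncomputable section

/-- A congestion game with incentives: `n` users, `R` resources,
finite nonempty action sets `act i ⊆ 2^E`, resource cost functions `cost e`
and incentive functions `tax e`. -/
structure CGame where
  n : ℕ
  R : ℕ
  act : Fin n → Finset (Finset (Fin R))
  act_ne : ∀ i, (act i).Nonempty
  cost : Fin R → ℕ → ℝ
  tax : Fin R → ℕ → ℝ

namespace CGame

variable (G : CGame)

/-- An assignment of actions (not necessarily feasible). -/
abbrev Assign := Fin G.n → Finset (Fin G.R)

/-- Feasibility of an assignment. -/
def IsAssign (a : G.Assign) : Prop := ∀ i, a i ∈ G.act i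

/-- The load `|a|_e`: the number of users selecting resource `e`. -/
def load (a : G.Assign) (e : Fin G.R) : ℕ :=
  (Finset.univ.filter fun i => e ∈ a i).card

/-- The social cost `SC(a)`. -/
def SC (a : G.Assign) : ℝ := ∑ i, ∑ e ∈ a i, G.cost e (G.load a e)

/-- The cost `C_i(a)` experienced by user `i` (resource costs plus incentives). -/
def userCost (i : Fin G.n) (a : G.Assign) : ℝ :=
  ∑ e ∈ a i, (G.cost e (G.load a e) + G.tax e (G.load a e))

/-- Pure Nash equilibrium. -/
def IsNE (a : G.Assign) : Prop :=
  G.IsAssign a ∧ ∀ i : Fin G.n, ∀ s ∈ G.act i,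
    G.userCost i a ≤ G.userCost i (Function.update a i s)

/-- The Rosenthal potential of the game with incentives. -/
def potential (a : G.Assign) : ℝ :=
  ∑ e, ∑ k ∈ Finset.Icc 1 (G.load a e), (G.cost e k + G.tax e k)

/-- The minimum achievable social cost. -/
def MinCost : ℝ := sInf {c | ∃ a, G.IsAssign a ∧ G.SC a = c}

end CGame

/-- A (local) incentive mechanism: a map from resource cost functions to
incentive functions. -/
abbrev Mech : Type := (ℕ → ℝ) → (ℕ → ℝ)

/-- Membership of a game in the class `𝒢` of congestion games with at most `n`
users, resource cost functions that are nonnegative linear combinations of the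
basis functions `b`, and incentives generated by the mechanism `T`. -/
def InClass (n m : ℕ) (b : Fin m → ℕ → ℝ) (T : Mech) (G : CGame) : Prop :=
  G.n ≤ n ∧
  (∀ e, ∃ α : Fin m → ℝ, (∀ j, 0 ≤ α j) ∧ ∀ x, G.cost e x = ∑ j, α j * b j x) ∧
  (∀ e x, G.tax e x = T (G.cost e) x)

/-- Price of anarchy of mechanism `T` over the class of congestion games with
at most `n` users and costs generated by the basis `b`. -/
def PoA (n m : ℕ) (b : Fin m → ℕ → ℝ) (T : Mech) : ℝ≥0∞ :=
  ⨆ G : CGame, ⨆ _ : InClass n m b T G ∧ 0 < G.MinCost,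
    ⨆ a : G.Assign, ⨆ _ : G.IsNE a, ENNReal.ofReal (G.SC a / G.MinCost)

/-- Price of stability of mechanism `T` over the class of congestion games with
at most `n` users and costs generated by the basis `b`. -/
def PoS (n m : ℕ) (b : Fin m → ℕ → ℝ) (T : Mech) : ℝ≥0∞ :=
  ⨆ G : CGame, ⨆ _ : InClass n m b T G ∧ 0 < G.MinCost,
    ⨅ a : {a : G.Assign // G.IsNE a}, ENNReal.ofReal (G.SC a.1 / G.MinCost)

/-- The marginal cost mechanism `T^mc(ℓ)(x) = (x−1)·[ℓ(x) − ℓ(x−1)]`. -/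
def Tmc : Mech := fun ℓ x => ((x : ℝ) - 1) * (ℓ x - ℓ (x - 1))

/-- Feasibility in the linear program of Proposition 2.1 (Paccagnan et al.):
`(F, ρ)` is feasible for basis function `b` and `n` users if `F(0) = F(n+1) = 0`
and `b(y)·y − ρ·b(x)·x + F(x)·(x−z) − F(x+1)·(y−z) ≥ 0` for all
`(x, y, z) ∈ I(n)`, i.e. all naturals with `z ≤ min{x,y}` and
`1 ≤ x + y − z ≤ n`. -/
def FeasPoA (n : ℕ) (b : ℕ → ℝ) (F : ℕ → ℝ) (ρ : ℝ) : Prop :=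
  F 0 = 0 ∧ F (n + 1) = 0 ∧
  ∀ x y z : ℕ, x ≤ n → y ≤ n → z ≤ x → z ≤ y → 1 ≤ x + y - z → x + y - z ≤ n →
    b y * y - ρ * (b x * x) + F x * ((x : ℝ) - (z : ℝ))
      - F (x + 1) * ((y : ℝ) - (z : ℝ)) ≥ 0

/-! Write `x_e, y_e, z_e` for the loads of a Nash equilibrium `a`, of an optimum `a'` and of
`i ↦ a i ∩ a' i`, and `f_e = ℓ_e + τ_e` for the total resource cost. Summing the LP inequality
over the resources gives `ρ · SC(a) ≤ SC(a') + Σ_i C_i(a) − Σ_i C_i(a'_i, a_{-i})`, and the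
last difference is `≤ 0` at equilibrium. For fixed `ρ` the LP constraints form a convex cone in
`(b, F)`, so since the `b_j` are nonnegative they pass, with `ρ = min_j ρ_j`, from the basis
functions to every `ℓ = Σ_j α_j b_j` and `F = Σ_j α_j F_j = ℓ + T(ℓ)`. -/

open Finset

namespace FeasPoA

variable {n : ℕ} {b F : ℕ → ℝ} {ρ : ℝ}

theorem of_le (h : FeasPoA n b F ρ) (hb : ∀ x, 1 ≤ x → x ≤ n → 0 ≤ b x) {ρ' : ℝ}
    (hρ : ρ' ≤ ρ) : FeasPoA n b F ρ' := by
  refine ⟨h.1, h.2.1, fun x y z hx hy hzx hzy h1 hn => ?_⟩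
  have hbx : 0 ≤ b x * x := by
    rcases Nat.eq_zero_or_pos x with rfl | hx0
    · simp
    · exact mul_nonneg (hb x hx0 hx) x.cast_nonneg
  nlinarith [h.2.2 x y z hx hy hzx hzy h1 hn]

theorem sum {ι : Type*} [Fintype ι] {b F : ι → ℕ → ℝ} {α : ι → ℝ} (hα : ∀ j, 0 ≤ α j)
    (h : ∀ j, FeasPoA n (b j) (F j) ρ) :
    FeasPoA n (fun k => ∑ j, α j * b j k) (fun k => ∑ j, α j * F j k) ρ := by
  refine ⟨by simp [(h _).1], by simp [(h _).2.1], fun x y z hx hy hzx hzy h1 hn => ?_⟩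
  rw [ge_iff_le]
  calc 0 ≤ ∑ j, α j * (b j y * y - ρ * (b j x * x) + F j x * ((x : ℝ) - z)
        - F j (x + 1) * ((y : ℝ) - z)) :=
      sum_nonneg fun j _ => mul_nonneg (hα j) ((h j).2.2 x y z hx hy hzx hzy h1 hn)
    _ = _ := by
      simp only [sum_mul, mul_sum, ← sum_sub_distrib, ← sum_add_distrib]
      exact sum_congr rfl fun j _ => by ring

theorem mul_le (h : FeasPoA n b F ρ) {x y z : ℕ} (hzx : z ≤ x) (hzy : z ≤ y)
    (hn : x + y - z ≤ n) :
    ρ * (b x * x) ≤ b y * y + F x * ((x : ℝ) - z) - F (x + 1) * ((y : ℝ) - z) := by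
  rcases Nat.eq_zero_or_pos (x + y - z) with h0 | h1
  · obtain ⟨rfl, rfl, rfl⟩ : x = 0 ∧ y = 0 ∧ z = 0 := by omega
    simp
  · linarith [h.2.2 x y z (by omega) (by omega) hzx hzy h1 hn]

end FeasPoA

namespace CGame

variable (G : CGame)

def totalCost (e : Fin G.R) (k : ℕ) : ℝ := G.cost e k + G.tax e k

theorem sum_sum_eq_sum_load_mul (a : G.Assign) (g : Fin G.R → ℝ) :
    ∑ i, ∑ e ∈ a i, g e = ∑ e, (G.load a e : ℝ) * g e := by
  rw [sum_comm' (t' := univ) (s' := fun e => univ.filter fun i => e ∈ a i) (by simp)]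
  simp only [sum_const, nsmul_eq_mul, load]

theorem load_le (a : G.Assign) (e : Fin G.R) : G.load a e ≤ G.n :=
  (card_filter_le _ _).trans_eq (card_fin G.n)

theorem load_add_load (a a' : G.Assign) (e : Fin G.R) :
    G.load a e + G.load a' e
      = G.load (fun i => a i ∪ a' i) e + G.load (fun i => a i ∩ a' i) e := by
  simp only [load, mem_union, mem_inter, filter_or, filter_and]
  exact (card_union_add_card_inter _ _).symm

theorem load_add_load_sub_load_inter_le (a a' : G.Assign) (e : Fin G.R) :
    G.load a e + G.load a' e - G.load (fun i => a i ∩ a' i) e ≤ G.n := by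
  have := G.load_le (fun i => a i ∪ a' i) e
  have := G.load_add_load a a' e
  omega

theorem load_inter_le_left (a a' : G.Assign) (e : Fin G.R) :
    G.load (fun i => a i ∩ a' i) e ≤ G.load a e :=
  card_le_card <| monotone_filter_right _ fun _ _ h => (mem_inter.1 h).1

theorem load_inter_le_right (a a' : G.Assign) (e : Fin G.R) :
    G.load (fun i => a i ∩ a' i) e ≤ G.load a' e :=
  card_le_card <| monotone_filter_right _ fun _ _ h => (mem_inter.1 h).2

theorem load_update_of_mem (a : G.Assign) (i : Fin G.n) {s : Finset (Fin G.R)} {e : Fin G.R}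
    (he : e ∈ s) :
    G.load (Function.update a i s) e = if e ∈ a i then G.load a e else G.load a e + 1 := by
  unfold load
  split_ifs with hea
  · congr 1
    ext k
    rcases eq_or_ne k i with rfl | hk <;> simp [*]
  · rw [← card_insert_of_notMem (by simpa using hea)]
    congr 1
    ext k
    rcases eq_or_ne k i with rfl | hk <;> simp [*]

theorem SC_eq_sum_load (a : G.Assign) :
    G.SC a = ∑ e, (G.load a e : ℝ) * G.cost e (G.load a e) :=
  G.sum_sum_eq_sum_load_mul a _

theorem userCost_eq (i : Fin G.n) (a : G.Assign) :
    G.userCost i a = ∑ e ∈ a i, G.totalCost e (G.load a e) :=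
  rfl

theorem sum_userCost (a : G.Assign) :
    ∑ i, G.userCost i a = ∑ e, (G.load a e : ℝ) * G.totalCost e (G.load a e) :=
  G.sum_sum_eq_sum_load_mul a _

theorem userCost_update (a : G.Assign) (i : Fin G.n) (s : Finset (Fin G.R)) :
    G.userCost i (Function.update a i s)
      = ∑ e ∈ a i ∩ s, (G.totalCost e (G.load a e) - G.totalCost e (G.load a e + 1))
        + ∑ e ∈ s, G.totalCost e (G.load a e + 1) := by
  have hterm : ∀ e ∈ s, G.totalCost e (G.load (Function.update a i s) e)
      = (if e ∈ a i then G.totalCost e (G.load a e) - G.totalCost e (G.load a e + 1) else 0)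
        + G.totalCost e (G.load a e + 1) := by
    intro e he
    rw [G.load_update_of_mem a i he]
    split_ifs <;> ring
  rw [userCost_eq, Function.update_self, sum_congr rfl hterm, sum_add_distrib, sum_ite_mem,
    inter_comm]

/-- A user deviating from `a` to `a' i` sees the current load on resources it already uses
and one more on the others. -/
theorem sum_userCost_update (a a' : G.Assign) :
    ∑ i, G.userCost i (Function.update a i (a' i))
      = ∑ e, ((G.load (fun i => a i ∩ a' i) e : ℝ) * G.totalCost e (G.load a e)
          + ((G.load a' e : ℝ) - G.load (fun i => a i ∩ a' i) e)
            * G.totalCost e (G.load a e + 1)) := by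
  rw [sum_congr rfl fun i _ => G.userCost_update a i (a' i), sum_add_distrib,
    G.sum_sum_eq_sum_load_mul (fun i => a i ∩ a' i), G.sum_sum_eq_sum_load_mul a',
    ← sum_add_distrib]
  exact sum_congr rfl fun e _ => by ring

theorem exists_SC_eq_MinCost : ∃ a, G.IsAssign a ∧ G.SC a = G.MinCost := by
  have hne : {c | ∃ a, G.IsAssign a ∧ G.SC a = c}.Nonempty :=
    ⟨_, fun i => (G.act_ne i).choose, fun i => (G.act_ne i).choose_spec, rfl⟩
  have hfin : {c | ∃ a, G.IsAssign a ∧ G.SC a = c}.Finite :=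
    (Set.finite_range G.SC).subset fun _ ⟨a, _, h⟩ => ⟨a, h⟩
  exact hne.csInf_mem hfin

variable {G}

theorem IsNE.mul_SC_le {n : ℕ} {ρ : ℝ} (hn : G.n ≤ n)
    (hfeas : ∀ e, FeasPoA n (G.cost e) (G.totalCost e) ρ) {a a' : G.Assign} (ha : G.IsNE a)
    (ha' : G.IsAssign a') : ρ * G.SC a ≤ G.SC a' := by
  set x := G.load a
  set y := G.load a'
  set z := G.load (fun i => a i ∩ a' i)
  have hLP : ∀ e, ρ * (G.cost e (x e) * x e) ≤ G.cost e (y e) * y e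
      + G.totalCost e (x e) * ((x e : ℝ) - z e)
      - G.totalCost e (x e + 1) * ((y e : ℝ) - z e) := fun e =>
    (hfeas e).mul_le (G.load_inter_le_left a a' e) (G.load_inter_le_right a a' e)
      ((G.load_add_load_sub_load_inter_le a a' e).trans hn)
  have hNE : ∑ i, G.userCost i a ≤ ∑ i, G.userCost i (Function.update a i (a' i)) :=
    sum_le_sum fun i _ => ha.2 i _ (ha' i)
  rw [sum_userCost, sum_userCost_update] at hNE
  calc ρ * G.SC a = ∑ e, ρ * (G.cost e (x e) * x e) := by
        rw [SC_eq_sum_load, mul_sum]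
        exact sum_congr rfl fun e _ => by ring
    _ ≤ ∑ e, (G.cost e (y e) * y e + G.totalCost e (x e) * ((x e : ℝ) - z e)
          - G.totalCost e (x e + 1) * ((y e : ℝ) - z e)) := sum_le_sum fun e _ => hLP e
    _ = G.SC a' + ∑ e, (x e : ℝ) * G.totalCost e (x e)
          - ∑ e, ((z e : ℝ) * G.totalCost e (x e)
            + ((y e : ℝ) - z e) * G.totalCost e (x e + 1)) := by
        rw [SC_eq_sum_load, ← sum_add_distrib, ← sum_sub_distrib]
        exact sum_congr rfl fun e _ => by ring
    _ ≤ G.SC a' := by linarith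

end CGame

namespace InClass

variable {n m : ℕ} {b : Fin m → ℕ → ℝ} {T : Mech} {G : CGame}

theorem SC_eq_zero [IsEmpty (Fin m)] (hG : InClass n m b T G) (a : G.Assign) : G.SC a = 0 :=
  sum_eq_zero fun _ _ => sum_eq_zero fun e _ => by
    obtain ⟨α, -, hα⟩ := hG.2.1 e
    simp [hα]

theorem feasPoA_totalCost (hG : InClass n m b T G) {F : Fin m → ℕ → ℝ} {ρ : ℝ}
    (hT : ∀ α : Fin m → ℝ, (∀ j, 0 ≤ α j) →
      ∀ x, T (fun y => ∑ j, α j * b j y) x = ∑ j, α j * (F j x - b j x))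
    (hfeas : ∀ j, FeasPoA n (b j) (F j) ρ) (e : Fin G.R) :
    FeasPoA n (G.cost e) (G.totalCost e) ρ := by
  obtain ⟨α, hα, hcost⟩ := hG.2.1 e
  have hcost' : G.cost e = fun k => ∑ j, α j * b j k := funext hcost
  have htotal : G.totalCost e = fun k => ∑ j, α j * F j k := by
    funext k
    rw [CGame.totalCost, hG.2.2, hcost', hT α hα, ← sum_add_distrib]
    exact sum_congr rfl fun j _ => by ring
  rw [hcost', htotal]
  exact FeasPoA.sum hα hfeas

end InClass

theorem feasible_LP_gives_PoA_upper_bound_general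
    (n m : ℕ)
    (b : Fin m → ℕ → ℝ)
    (hbpos : ∀ j, ∀ x : ℕ, 1 ≤ x → x ≤ n → 0 < b j x)
    (F : Fin m → ℕ → ℝ) (ρ : Fin m → ℝ)
    (hρpos : ∀ j, 0 < ρ j)
    (hfeas : ∀ j, FeasPoA n (b j) (F j) (ρ j))
    (T : Mech)
    (hT : ∀ α : Fin m → ℝ, (∀ j, 0 ≤ α j) →
      ∀ x, T (fun y => ∑ j, α j * b j y) x = ∑ j, α j * (F j x - b j x)) :
    PoA n m b T ≤ ⨆ j : Fin m, ENNReal.ofReal (1 / ρ j) := by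
  refine iSup₂_le fun G ⟨hG, hMin⟩ => iSup₂_le fun a ha => ?_
  rcases isEmpty_or_nonempty (Fin m) with hm | hm
  · simp [hG.SC_eq_zero a]
  obtain ⟨j₀, -, hj₀⟩ := exists_min_image univ ρ univ_nonempty
  have hfeasG := hG.feasPoA_totalCost hT fun j =>
    (hfeas j).of_le (fun x hx hxn => (hbpos j x hx hxn).le) (hj₀ j (mem_univ j))
  obtain ⟨a', ha', hSC⟩ := G.exists_SC_eq_MinCost
  have hbound : ρ j₀ * G.SC a ≤ G.MinCost := hSC ▸ ha.mul_SC_le hG.1 hfeasG ha'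
  calc ENNReal.ofReal (G.SC a / G.MinCost) ≤ ENNReal.ofReal (1 / ρ j₀) :=
        ENNReal.ofReal_le_ofReal <| (div_le_div_iff₀ hMin (hρpos j₀)).2 (by linarith)
    _ ≤ _ := le_iSup (fun j => ENNReal.ofReal (1 / ρ j)) j₀

/-- Over congestion games with at most `n` users and costs
generated by positive basis functions `b_1, …, b_m` (with `b_j(0) = 0`), if for
each `j` the pair `(F_j, ρ_j)` with `ρ_j > 0` satisfies the linear program
constraints, then the linear local mechanism `T` with `T(b_j) = F_j − b_j`
satisfies `PoA(T) ≤ max_j 1/ρ_j`. -/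
theorem feasible_LP_gives_PoA_upper_bound
    (n m : ℕ)
    (b : Fin m → ℕ → ℝ)
    (hb0 : ∀ j, b j 0 = 0)
    (hbpos : ∀ j, ∀ x : ℕ, 1 ≤ x → x ≤ n → 0 < b j x)
    (F : Fin m → ℕ → ℝ) (ρ : Fin m → ℝ)
    (hρpos : ∀ j, 0 < ρ j)
    (hfeas : ∀ j, FeasPoA n (b j) (F j) (ρ j))
    (T : Mech)
    (hT : ∀ α : Fin m → ℝ, (∀ j, 0 ≤ α j) →
      ∀ x, T (fun y => ∑ j, α j * b j y) x = ∑ j, α j * (F j x - b j x)) :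
    PoA n m b T ≤ ⨆ j : Fin m, ENNReal.ofReal (1 / ρ j) :=
  feasible_LP_gives_PoA_upper_bound_general n m b hbpos F ρ hρpos hfeas T hT
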